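/- arXiv:1802.04089 — 3 statements merged into one kernel-verified Lean document; each statement's English description precedes it below -/
import Mathlib

section
/- Let n ∈ ℕ, β > (n+1)/2 and d > 1. Then, with σ = 1, (1/(2√π)) · (1+d²)^{-β+n/2} / √(β - (n-1)/2) < F̃(d) < (1/√(2π)) · (1+d²)^{-β+n/2} / √(β - (n+1)/2). -/
open MeasureTheory Filter Set
open scoped ENNReal Pointwise RealInnerProductSpace

noncomputable section

/-- `ℝ^n` with the Euclidean structure. -/
abbrev Euc (n : ℕ) : Type := EuclideanSpace ℝ (Fin n)

/-- The beta distribution `ν_β` on `ℝ^n`: density `c_{n,β} (1-‖x‖²)^β` on the unit ball. -/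
def betaMeasure (n : ℕ) (β : ℝ) : Measure (Euc n) :=
  volume.withDensity fun x =>
    ENNReal.ofReal (if ‖x‖ ≤ 1 then
      Real.pi ^ (-(n : ℝ) / 2) * Real.Gamma (β + (n : ℝ) / 2 + 1) / Real.Gamma (β + 1)
        * (1 - ‖x‖ ^ 2) ^ β
    else 0)

/-- `F(d) = ∫_d^1 f_β(t) dt`, the tail of the one-dimensional marginal of `ν_β`. -/
def betaF (n : ℕ) (β : ℝ) (d : ℝ) : ℝ :=
  ∫ t in d..1,
    Real.pi ^ (-(1 : ℝ) / 2) * Real.Gamma (β + (n : ℝ) / 2 + 1) /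
        Real.Gamma (β + ((n : ℝ) + 1) / 2) *
      (1 - t ^ 2) ^ (β + ((n : ℝ) - 1) / 2)

/-- The beta-prime distribution `ν̃_{β,σ}` on `ℝ^n`. -/
def betaPrimeMeasure (n : ℕ) (β σ : ℝ) : Measure (Euc n) :=
  volume.withDensity fun x =>
    ENNReal.ofReal (σ ^ (-(n : ℝ)) * Real.pi ^ (-(n : ℝ) / 2) * Real.Gamma β /
        Real.Gamma (β - (n : ℝ) / 2) * (1 + ‖x‖ ^ 2 / σ ^ 2) ^ (-β))

/-- `F̃(d) = ∫_d^∞ f̃_{β,σ}(t) dt`, the tail of the one-dimensional marginal of `ν̃_{β,σ}`. -/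
def betaPrimeF (n : ℕ) (β σ : ℝ) (d : ℝ) : ℝ :=
  ∫ t in Set.Ioi d,
    σ⁻¹ * Real.pi ^ (-(1 : ℝ) / 2) * Real.Gamma (β - ((n : ℝ) - 1) / 2) /
        Real.Gamma (β - (n : ℝ) / 2) *
      (1 + t ^ 2 / σ ^ 2) ^ (-β + ((n : ℝ) - 1) / 2)

/-- Lebesgue volume of the Euclidean unit ball in `ℝ^n`. -/
def ballVol (n : ℕ) : ℝ := (volume (Metric.closedBall (0 : Euc n) 1)).toReal

/-- Expected Lebesgue volume of the convex hull of `N` i.i.d. points with law `ν`. -/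
def expVolHull (n N : ℕ) (ν : Measure (Euc n)) : ℝ :=
  ∫ X : Fin N → Euc n, (volume (convexHull ℝ (Set.range X))).toReal
    ∂Measure.pi fun _ => ν

/-- Expected `μ`-measure of the convex hull of `N` i.i.d. points with law `ν`. -/
def expMeasHull (n N : ℕ) (ν μ : Measure (Euc n)) : ℝ :=
  ∫ X : Fin N → Euc n, (μ (convexHull ℝ (Set.range X))).toReal
    ∂Measure.pi fun _ => ν

/-- The uniform probability measure on the closed unit ball of `ℝ^n`. -/
def unifBall (n : ℕ) : Measure (Euc n) :=
  (volume (Metric.closedBall (0 : Euc n) 1))⁻¹ •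
    volume.restrict (Metric.closedBall (0 : Euc n) 1)

/-- The standard Gaussian measure on `ℝ^n`. -/
def stdGaussian (n : ℕ) : Measure (Euc n) :=
  volume.withDensity fun x =>
    ENNReal.ofReal ((2 * Real.pi) ^ (-(n : ℝ) / 2) * Real.exp (-‖x‖ ^ 2 / 2))

/-- A measure `μ` on `ℝ^n` is log-concave. -/
def IsLogConcaveM {n : ℕ} (μ : Measure (Euc n)) : Prop :=
  ∀ A B : Set (Euc n), IsCompact A → IsCompact B → ∀ l : ℝ, 0 < l → l < 1 →
    (μ A).toReal ^ (1 - l) * (μ B).toReal ^ l ≤ (μ ((1 - l) • A + l • B)).toReal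

/-- A measure `μ` on `ℝ^n` is isotropic. -/
def IsIsotropicM {n : ℕ} (μ : Measure (Euc n)) : Prop :=
  ∀ θ : Euc n, ‖θ‖ = 1 →
    (∫ x, (inner ℝ x θ : ℝ) ∂μ) = 0 ∧ (∫ x, (inner ℝ x θ : ℝ) ^ 2 ∂μ) = 1

/-!
With `γ = β - (n - 1) / 2 > 1`, `F̃(d) = π^{-1/2} Γ(γ) / Γ(γ - 1/2) · ∫_d^∞ (1 + t²)^{-γ} dt`.
Since `t < √(1 + t²) < √2 t` for `t > 1`, this integral lies strictly between `J` and `√2 J`,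
where `J = ∫_d^∞ t (1 + t²)^{-γ-1/2} dt = (1 + d²)^{1/2-γ} / (2γ - 1)` has an explicit primitive.
The Gamma quotient that remains is squeezed by the log-convexity of `Γ`:
`1 / √x ≤ Γ(x) / Γ(x + 1/2) ≤ 1 / √(x - 1/2)`.
-/

open scoped Topology

namespace Real

theorem Gamma_add_half_sq_le {x : ℝ} (hx : 0 < x) :
    Gamma (x + 1 / 2) ^ 2 ≤ Gamma x * Gamma (x + 1) := by
  have h := Gamma_mul_add_mul_le_rpow_Gamma_mul_rpow_Gamma hx (by linarith : 0 < x + 1)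
    (by norm_num : (0 : ℝ) < 1 / 2) (by norm_num : (0 : ℝ) < 1 / 2) (by norm_num)
  rw [show 1 / 2 * x + 1 / 2 * (x + 1) = x + 1 / 2 by ring,
    ← mul_rpow (Gamma_pos_of_pos hx).le (Gamma_pos_of_pos (by linarith)).le,
    ← sqrt_eq_rpow] at h
  exact (le_sqrt' (Gamma_pos_of_pos (by linarith))).1 h

theorem one_div_sqrt_le_Gamma_div_Gamma_add_half {x : ℝ} (hx : 0 < x) :
    1 / √x ≤ Gamma x / Gamma (x + 1 / 2) := by
  have h := Gamma_add_half_sq_le hx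
  rw [Gamma_add_one hx.ne'] at h
  rw [div_le_div_iff₀ (by positivity) (Gamma_pos_of_pos (by linarith)), one_mul]
  refine (pow_le_pow_iff_left₀ (Gamma_pos_of_pos (by linarith)).le
    (by positivity [Gamma_pos_of_pos hx]) two_ne_zero).1 ?_
  rw [mul_pow, sq_sqrt hx.le]
  linarith

theorem Gamma_div_Gamma_add_half_le_one_div_sqrt {x : ℝ} (hx : 1 / 2 < x) :
    Gamma x / Gamma (x + 1 / 2) ≤ 1 / √(x - 1 / 2) := by
  have hpos : 0 < x - 1 / 2 := sub_pos.2 hx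
  have h := Gamma_add_half_sq_le hpos
  rw [sub_add_cancel, show x - 1 / 2 + 1 = x + 1 / 2 by ring] at h
  have hrec : Gamma (x + 1 / 2) = (x - 1 / 2) * Gamma (x - 1 / 2) := by
    rw [← Gamma_add_one hpos.ne']; ring_nf
  rw [div_le_div_iff₀ (Gamma_pos_of_pos (by linarith)) (by positivity), one_mul, mul_comm]
  refine (pow_le_pow_iff_left₀ (by positivity [Gamma_pos_of_pos (by linarith : 0 < x)])
    (Gamma_pos_of_pos (by linarith)).le two_ne_zero).1 ?_
  calc (√(x - 1 / 2) * Gamma x) ^ 2 = (x - 1 / 2) * Gamma x ^ 2 := by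
        rw [mul_pow, sq_sqrt hpos.le]
    _ ≤ (x - 1 / 2) * (Gamma (x - 1 / 2) * Gamma (x + 1 / 2)) :=
        mul_le_mul_of_nonneg_left h hpos.le
    _ = Gamma (x + 1 / 2) ^ 2 := by rw [hrec]; ring

end Real

theorem setIntegral_lt_setIntegral_of_forall_lt {α : Type*} [MeasurableSpace α] {μ : Measure α}
    {s : Set α} {f g : α → ℝ} (hs : MeasurableSet s) (hμs : μ s ≠ 0)
    (hf : IntegrableOn f s μ) (hg : IntegrableOn g s μ) (hfg : ∀ x ∈ s, f x < g x) :
    ∫ x in s, f x ∂μ < ∫ x in s, g x ∂μ := by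
  rw [← sub_pos, ← integral_sub hg hf]
  refine (setIntegral_pos_iff_support_of_nonneg_ae ?_ (hg.sub hf)).2 ?_
  · filter_upwards [ae_restrict_mem hs] with x hx using (sub_pos.2 (hfg x hx)).le
  · refine (pos_iff_ne_zero.2 hμs).trans_le (measure_mono fun x hx => ⟨?_, hx⟩)
    exact (sub_pos.2 (hfg x hx)).ne'

theorem integrableOn_rpow_one_add_sq_neg {γ : ℝ} (hγ : 1 / 2 < γ) (s : Set ℝ) :
    IntegrableOn (fun t : ℝ => (1 + t ^ 2) ^ (-γ)) s := by
  have h := integrable_rpow_neg_one_add_norm_sq (E := ℝ) (μ := volume) (r := 2 * γ)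
    (by simp; linarith)
  simp only [Real.norm_eq_abs, sq_abs, show -(2 * γ) / 2 = -γ by ring] at h
  exact h.integrableOn

theorem hasDerivAt_rpow_one_add_sq (s t : ℝ) :
    HasDerivAt (fun t : ℝ => (1 + t ^ 2) ^ s) (2 * s * (t * (1 + t ^ 2) ^ (s - 1))) t := by
  have h := ((hasDerivAt_pow 2 t).const_add 1).rpow_const (p := s) (Or.inl (by positivity))
  convert h using 1
  push_cast; ring

section OneAddSqTail

variable {s d : ℝ}

private theorem hasDerivAt_primitive (hs : 1 < s) (t : ℝ) :
    HasDerivAt (fun t : ℝ => -(1 + t ^ 2) ^ (1 - s) / (2 * (s - 1)))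
      (t * (1 + t ^ 2) ^ (-s)) t := by
  refine (((hasDerivAt_rpow_one_add_sq (1 - s) t).neg).div_const (2 * (s - 1))).congr_deriv ?_
  rw [show 1 - s - 1 = -s by ring]
  field_simp [show s - 1 ≠ 0 by linarith]
  ring

private theorem tendsto_primitive_atTop (hs : 1 < s) :
    Tendsto (fun t : ℝ => -(1 + t ^ 2) ^ (1 - s) / (2 * (s - 1))) atTop (𝓝 0) := by
  have h : Tendsto (fun t : ℝ => 1 + t ^ 2) atTop atTop :=
    tendsto_atTop_add_const_left _ 1 (tendsto_pow_atTop two_ne_zero)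
  have := ((tendsto_rpow_neg_atTop (by linarith : 0 < s - 1)).comp h).neg.div_const (2 * (s - 1))
  simpa [Function.comp_def, show -(s - 1) = 1 - s by ring] using this

theorem integrableOn_Ioi_mul_rpow_one_add_sq (hs : 1 < s) (hd : 0 ≤ d) :
    IntegrableOn (fun t : ℝ => t * (1 + t ^ 2) ^ (-s)) (Ioi d) :=
  integrableOn_Ioi_deriv_of_nonneg' (fun t _ => hasDerivAt_primitive hs t)
    (fun t ht => by have : 0 < t := hd.trans_lt ht; positivity) (tendsto_primitive_atTop hs)

theorem integral_Ioi_mul_rpow_one_add_sq (hs : 1 < s) (hd : 0 ≤ d) :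
    ∫ t in Ioi d, t * (1 + t ^ 2) ^ (-s) = (1 + d ^ 2) ^ (1 - s) / (2 * (s - 1)) := by
  rw [integral_Ioi_of_hasDerivAt_of_nonneg' (fun t _ => hasDerivAt_primitive hs t)
    (fun t ht => by have : 0 < t := hd.trans_lt ht; positivity) (tendsto_primitive_atTop hs)]
  ring

end OneAddSqTail

theorem rpow_one_add_sq_eq_sqrt_mul (γ t : ℝ) :
    (1 + t ^ 2) ^ (-γ) = √(1 + t ^ 2) * (1 + t ^ 2) ^ (-(γ + 1 / 2)) := by
  rw [Real.sqrt_eq_rpow, ← Real.rpow_add (by positivity)]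
  ring_nf

theorem mul_rpow_one_add_sq_lt (γ t : ℝ) :
    t * (1 + t ^ 2) ^ (-(γ + 1 / 2)) < (1 + t ^ 2) ^ (-γ) := by
  rw [rpow_one_add_sq_eq_sqrt_mul γ t]
  gcongr
  exact Real.lt_sqrt_of_sq_lt (by linarith)

theorem rpow_one_add_sq_lt_sqrt_two_mul (γ : ℝ) {t : ℝ} (ht : 1 < t) :
    (1 + t ^ 2) ^ (-γ) < √2 * (t * (1 + t ^ 2) ^ (-(γ + 1 / 2))) := by
  rw [rpow_one_add_sq_eq_sqrt_mul γ t, ← mul_assoc]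
  gcongr
  rw [Real.sqrt_lt' (by positivity), mul_pow, Real.sq_sqrt zero_le_two]
  nlinarith

theorem integral_Ioi_rpow_one_add_sq_bounds {γ d : ℝ} (hγ : 1 / 2 < γ) (hd : 1 ≤ d) :
    (1 + d ^ 2) ^ (1 / 2 - γ) / (2 * γ - 1) < ∫ t in Ioi d, (1 + t ^ 2) ^ (-γ) ∧
      ∫ t in Ioi d, (1 + t ^ 2) ^ (-γ) < √2 * ((1 + d ^ 2) ^ (1 / 2 - γ) / (2 * γ - 1)) := by
  have hs : 1 < γ + 1 / 2 := by linarith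
  have hJ := integral_Ioi_mul_rpow_one_add_sq hs (zero_le_one.trans hd)
  rw [show 1 - (γ + 1 / 2) = 1 / 2 - γ by ring, show 2 * (γ + 1 / 2 - 1) = 2 * γ - 1 by ring]
    at hJ
  have hJint := integrableOn_Ioi_mul_rpow_one_add_sq hs (zero_le_one.trans hd)
  have hIint := integrableOn_rpow_one_add_sq_neg hγ (Ioi d)
  have hvol : volume (Ioi d) ≠ 0 := by simp
  rw [← hJ, ← integral_const_mul]
  exact ⟨setIntegral_lt_setIntegral_of_forall_lt measurableSet_Ioi hvol hJint hIint
      fun t _ => mul_rpow_one_add_sq_lt γ t,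
    setIntegral_lt_setIntegral_of_forall_lt measurableSet_Ioi hvol hIint (hJint.const_mul _)
      fun t ht => rpow_one_add_sq_lt_sqrt_two_mul γ (hd.trans_lt ht)⟩

theorem betaPrimeF_one_eq (n : ℕ) (β d : ℝ) :
    betaPrimeF n β 1 d = (√Real.pi)⁻¹ * (Real.Gamma (β - ((n : ℝ) - 1) / 2) /
      Real.Gamma (β - (n : ℝ) / 2)) * ∫ t in Ioi d, (1 + t ^ 2) ^ (-β + ((n : ℝ) - 1) / 2) := by
  rw [betaPrimeF, ← integral_const_mul, Real.sqrt_eq_rpow, ← Real.rpow_neg Real.pi_pos.le]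
  norm_num [mul_div_assoc]

theorem betaPrimeF_bounds_general (n : ℕ) (β : ℝ) (hβ : ((n : ℝ) + 1) / 2 < β)
    (d : ℝ) (hd : 1 < d) :
    1 / (2 * Real.sqrt Real.pi) * (1 + d ^ 2) ^ (-β + (n : ℝ) / 2) /
        Real.sqrt (β - ((n : ℝ) - 1) / 2) < betaPrimeF n β 1 d ∧
    betaPrimeF n β 1 d < 1 / Real.sqrt (2 * Real.pi) * (1 + d ^ 2) ^ (-β + (n : ℝ) / 2) /
        Real.sqrt (β - ((n : ℝ) + 1) / 2) := by
  set γ : ℝ := β - ((n : ℝ) - 1) / 2 with hγ_def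
  have hγ : 1 < γ := by linarith
  rw [betaPrimeF_one_eq, show β - (n : ℝ) / 2 = γ - 1 / 2 by ring,
    show -β + ((n : ℝ) - 1) / 2 = -γ by ring, show -β + (n : ℝ) / 2 = 1 / 2 - γ by ring,
    show β - ((n : ℝ) + 1) / 2 = γ - 1 by ring]
  obtain ⟨hI_low, hI_up⟩ := integral_Ioi_rpow_one_add_sq_bounds (by linarith : 1 / 2 < γ) hd.le
  set A := (1 + d ^ 2) ^ (1 / 2 - γ)
  set r := Real.Gamma γ / Real.Gamma (γ + 1 / 2) with hr_def
  have hΓ_sub := Real.Gamma_pos_of_pos (by linarith : 0 < γ - 1 / 2)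
  set K := (√Real.pi)⁻¹ * (Real.Gamma γ / Real.Gamma (γ - 1 / 2)) with hK_def
  have hK : 0 < K := mul_pos (inv_pos.2 (Real.sqrt_pos.2 Real.pi_pos))
    (div_pos (Real.Gamma_pos_of_pos (by linarith)) hΓ_sub)
  have hKJ : K * (A / (2 * γ - 1)) = A / (2 * √Real.pi) * r := by
    rw [hK_def, hr_def, show γ + 1 / 2 = γ - 1 / 2 + 1 by ring, Real.Gamma_add_one (by linarith)]
    field_simp [hΓ_sub.ne']
  have hr_low : 1 / √γ ≤ r := Real.one_div_sqrt_le_Gamma_div_Gamma_add_half (by linarith)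
  have hr_up : r ≤ 1 / √(γ - 1) :=
    (Real.Gamma_div_Gamma_add_half_le_one_div_sqrt (by linarith)).trans
      (one_div_le_one_div_of_le (by positivity) (Real.sqrt_le_sqrt (by linarith)))
  constructor
  · calc 1 / (2 * √Real.pi) * A / √γ = A / (2 * √Real.pi) * (1 / √γ) := by ring
      _ ≤ A / (2 * √Real.pi) * r := by gcongr
      _ = K * (A / (2 * γ - 1)) := hKJ.symm
      _ < _ := by gcongr
  · calc _ < K * (√2 * (A / (2 * γ - 1))) := by gcongr
      _ = √2 * (A / (2 * √Real.pi) * r) := by rw [← hKJ]; ring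
      _ ≤ √2 * (A / (2 * √Real.pi) * (1 / √(γ - 1))) := by gcongr
      _ = 1 / √(2 * Real.pi) * A / √(γ - 1) := by
        rw [Real.sqrt_mul zero_le_two]
        field_simp
        rw [Real.sq_sqrt zero_le_two]
        ring

/-- Bounds for the marginal tail `F̃` of the beta-prime distribution with `σ = 1`
(equation (2.1)). -/
theorem betaPrimeF_bounds (n : ℕ) (hn : 1 ≤ n) (β : ℝ) (hβ : ((n : ℝ) + 1) / 2 < β)
    (d : ℝ) (hd : 1 < d) :
    1 / (2 * Real.sqrt Real.pi) * (1 + d ^ 2) ^ (-β + (n : ℝ) / 2) /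
        Real.sqrt (β - ((n : ℝ) - 1) / 2) < betaPrimeF n β 1 d ∧
    betaPrimeF n β 1 d < 1 / Real.sqrt (2 * Real.pi) * (1 + d ^ 2) ^ (-β + (n : ℝ) / 2) /
        Real.sqrt (β - ((n : ℝ) + 1) / 2) :=
  betaPrimeF_bounds_general n β hβ d hd

end
end

section
/- Let (a_n) and (b_n) be sequences of real numbers with a_n ≥ 0, b_n > 1/2 and b_n → ∞. If a_n⁴/b_n → 0, then ∫_{a_n}^∞ (1 + t²/(2b_n))^{-b_n} dt ∼ ∫_{a_n}^∞ e^{-t²/2} dt as n → ∞; if additionally a_n → ∞, then ∫_{a_n}^∞ (1 + t²/(2b_n))^{-b_n} dt ∼ e^{-a_n²/2}/a_n as n → ∞. -/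
open MeasureTheory Filter Set
open scoped ENNReal Pointwise RealInnerProductSpace

noncomputable section

/-!
Writing `(1 + t²/(2b))^(-b) = exp (-b log (1 + t²/(2b)))` and using `x - x²/2 ≤ log (1 + x) ≤ x`,
the kernel lies between `exp (-t²/2)` and `exp (-t²/2 + t⁴/(8b))`; the lower bound gives ratio
`≥ 1`. For the upper bound, split the tail at some `c ≥ a + 1` with `c → ∞` and `c⁴/b → 0`
(`c = a + b^(1/8)` works). On `(a, c]` the kernel is at most `exp (c⁴/(8b))` times the Gaussian.
Beyond `c`, `t² ≥ ct` bounds the kernel by `(1 + ct/(2b))^(-b)`, whose tail integral is `O(1/c)`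
times the kernel at `c`, hence `o(exp (-c²/2)) = o(∫_a^∞ exp (-t²/2))`. The second claim follows
from the Mills-ratio bounds `a/(a²+1) · exp (-a²/2) ≤ ∫_a^∞ exp (-t²/2) ≤ exp (-a²/2)/a`.
-/

open Real Topology

lemma sub_sq_div_two_le_log_one_add {x : ℝ} (hx : 0 ≤ x) : x - x ^ 2 / 2 ≤ log (1 + x) := by
  refine le_trans ?_ (le_log_one_add_of_nonneg hx)
  rw [le_div_iff₀ (by linarith)]
  nlinarith [pow_nonneg hx 3]

section Kernel

variable {b : ℝ}

lemma one_add_sq_div_rpow_neg_eq_exp (hb : 0 < b) (t : ℝ) :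
    (1 + t ^ 2 / (2 * b)) ^ (-b) = exp (-b * log (1 + t ^ 2 / (2 * b))) := by
  rw [rpow_def_of_pos (by positivity), mul_comm]

lemma exp_neg_sq_div_two_le_one_add_sq_div_rpow_neg (hb : 0 < b) (t : ℝ) :
    exp (-t ^ 2 / 2) ≤ (1 + t ^ 2 / (2 * b)) ^ (-b) := by
  rw [one_add_sq_div_rpow_neg_eq_exp hb, exp_le_exp]
  have hlog : log (1 + t ^ 2 / (2 * b)) ≤ t ^ 2 / (2 * b) := by
    linarith [log_le_sub_one_of_pos (show 0 < 1 + t ^ 2 / (2 * b) by positivity)]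
  calc -t ^ 2 / 2 = -b * (t ^ 2 / (2 * b)) := by field_simp
    _ ≤ -b * log (1 + t ^ 2 / (2 * b)) := by nlinarith

lemma one_add_sq_div_rpow_neg_le_exp (hb : 0 < b) (t : ℝ) :
    (1 + t ^ 2 / (2 * b)) ^ (-b) ≤ exp (-t ^ 2 / 2 + t ^ 4 / (8 * b)) := by
  rw [one_add_sq_div_rpow_neg_eq_exp hb, exp_le_exp]
  have hlog := sub_sq_div_two_le_log_one_add (show 0 ≤ t ^ 2 / (2 * b) by positivity)
  calc -b * log (1 + t ^ 2 / (2 * b)) ≤ -b * (t ^ 2 / (2 * b) - (t ^ 2 / (2 * b)) ^ 2 / 2) := by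
        nlinarith
    _ = -t ^ 2 / 2 + t ^ 4 / (8 * b) := by field_simp; ring

lemma integrable_one_add_sq_div_rpow_neg (hb : 1 / 2 < b) :
    Integrable fun t : ℝ => (1 + t ^ 2 / (2 * b)) ^ (-b) := by
  have h2b : (0 : ℝ) < 2 * b := by linarith
  have := (integrable_rpow_neg_one_add_norm_sq (E := ℝ) (μ := volume) (r := 2 * b)
    (by simp; linarith)).comp_div (sqrt_pos.2 h2b).ne'
  refine this.congr (Eventually.of_forall fun t => ?_)
  simp only [Real.norm_eq_abs, sq_abs, div_pow, sq_sqrt h2b.le]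
  ring_nf

end Kernel

section LinearTail

variable {k b x : ℝ}

lemma one_add_mul_pos_of_le (hk : 0 < k) (hx : 0 < 1 + k * x) {t : ℝ} (ht : x ≤ t) :
    0 < 1 + k * t := by
  nlinarith

lemma hasDerivAt_one_add_mul_rpow_one_sub (hk : 0 < k) (hb : 1 < b) (hx : 0 < 1 + k * x)
    {t : ℝ} (ht : t ∈ Ici x) :
    HasDerivAt (fun s => -(1 + k * s) ^ (1 - b) / (k * (b - 1))) ((1 + k * t) ^ (-b)) t := by
  have h := (((hasDerivAt_id t).const_mul k).const_add 1).rpow_const (p := 1 - b)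
    (Or.inl (one_add_mul_pos_of_le hk hx ht).ne')
  refine (h.neg.div_const (k * (b - 1))).congr_deriv ?_
  rw [show 1 - b - 1 = -b by ring, id]
  field_simp [hk.ne', (by linarith : b - 1 ≠ 0)]
  ring

lemma tendsto_one_add_mul_rpow_one_sub (hk : 0 < k) (hb : 1 < b) :
    Tendsto (fun s => -(1 + k * s) ^ (1 - b) / (k * (b - 1))) atTop (𝓝 0) := by
  have hlin : Tendsto (fun s => 1 + k * s) atTop atTop :=
    tendsto_atTop_add_const_left _ 1 (tendsto_id.const_mul_atTop hk)
  have hpow : Tendsto (fun y : ℝ => y ^ (1 - b)) atTop (𝓝 0) := by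
    simpa using tendsto_rpow_neg_atTop (show 0 < b - 1 by linarith)
  simpa using ((hpow.comp hlin).neg).div_const (k * (b - 1))

lemma integrableOn_Ioi_one_add_mul_rpow_neg (hk : 0 < k) (hb : 1 < b) (hx : 0 < 1 + k * x) :
    IntegrableOn (fun t => (1 + k * t) ^ (-b)) (Ioi x) :=
  integrableOn_Ioi_deriv_of_nonneg'
    (fun _ => hasDerivAt_one_add_mul_rpow_one_sub hk hb hx)
    (fun _ ht => (rpow_pos_of_pos (one_add_mul_pos_of_le hk hx (le_of_lt ht)) _).le)
    (tendsto_one_add_mul_rpow_one_sub hk hb)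

lemma integral_Ioi_one_add_mul_rpow_neg (hk : 0 < k) (hb : 1 < b) (hx : 0 < 1 + k * x) :
    ∫ t in Ioi x, (1 + k * t) ^ (-b) = (1 + k * x) ^ (1 - b) / (k * (b - 1)) := by
  rw [integral_Ioi_of_hasDerivAt_of_nonneg' (fun _ => hasDerivAt_one_add_mul_rpow_one_sub hk hb hx)
    (fun _ ht => (rpow_pos_of_pos (one_add_mul_pos_of_le hk hx (le_of_lt ht)) _).le)
    (tendsto_one_add_mul_rpow_one_sub hk hb)]
  ring

end LinearTail

section GaussianTail

lemma integrable_exp_neg_sq_div_two : Integrable fun t : ℝ => exp (-t ^ 2 / 2) := by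
  simpa [neg_div, div_eq_inv_mul] using
    integrable_exp_neg_mul_sq (show (0 : ℝ) < 2⁻¹ by norm_num)

lemma hasDerivAt_neg_exp_neg_sq_div_two (t : ℝ) :
    HasDerivAt (fun s => -exp (-s ^ 2 / 2)) (t * exp (-t ^ 2 / 2)) t := by
  have h := (((hasDerivAt_pow 2 t).neg.div_const 2).exp).neg
  refine h.congr_deriv ?_
  simp only [Pi.neg_apply]
  push_cast
  ring

lemma tendsto_exp_neg_sq_div_two : Tendsto (fun t : ℝ => exp (-t ^ 2 / 2)) atTop (𝓝 0) :=
  tendsto_exp_atBot.comp <| (tendsto_div_const_atBot_of_pos two_pos).2 <|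
    tendsto_neg_atTop_atBot.comp (tendsto_pow_atTop two_ne_zero)

lemma integrable_mul_exp_neg_sq_div_two : Integrable fun t : ℝ => t * exp (-t ^ 2 / 2) := by
  simpa [neg_div, div_eq_inv_mul] using
    integrable_mul_exp_neg_mul_sq (show (0 : ℝ) < 2⁻¹ by norm_num)

lemma integral_Ioi_mul_exp_neg_sq_div_two (a : ℝ) :
    ∫ t in Ioi a, t * exp (-t ^ 2 / 2) = exp (-a ^ 2 / 2) := by
  rw [integral_Ioi_of_hasDerivAt_of_tendsto' (fun t _ => hasDerivAt_neg_exp_neg_sq_div_two t)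
    integrable_mul_exp_neg_sq_div_two.integrableOn (by simpa using tendsto_exp_neg_sq_div_two.neg)]
  ring

lemma integral_Ioi_exp_neg_sq_div_two_le {a : ℝ} (ha : 0 < a) :
    ∫ t in Ioi a, exp (-t ^ 2 / 2) ≤ exp (-a ^ 2 / 2) / a := by
  calc ∫ t in Ioi a, exp (-t ^ 2 / 2) ≤ ∫ t in Ioi a, a⁻¹ * (t * exp (-t ^ 2 / 2)) := by
        refine setIntegral_mono_on integrable_exp_neg_sq_div_two.integrableOn
          (integrable_mul_exp_neg_sq_div_two.integrableOn.const_mul _) measurableSet_Ioi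
          fun t ht => ?_
        rw [← mul_assoc]
        refine le_mul_of_one_le_left (exp_pos _).le ?_
        rw [← div_eq_inv_mul, one_le_div ha]
        exact le_of_lt ht
    _ = exp (-a ^ 2 / 2) / a := by
        rw [integral_const_mul, integral_Ioi_mul_exp_neg_sq_div_two a, inv_mul_eq_div]

lemma hasDerivAt_neg_div_sq_add_one_mul_exp_neg_sq_div_two (t : ℝ) :
    HasDerivAt (fun s => -(s / (s ^ 2 + 1)) * exp (-s ^ 2 / 2))
      (exp (-t ^ 2 / 2) * (1 - 2 / (t ^ 2 + 1) ^ 2)) t := by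
  have hq := (hasDerivAt_id t).div ((hasDerivAt_pow 2 t).add_const 1) (by positivity)
  have he := ((hasDerivAt_pow 2 t).neg.div_const 2).exp
  refine (hq.neg.mul he).congr_deriv ?_
  simp only [Pi.neg_apply, Pi.div_apply, id]
  field_simp
  ring

lemma le_integral_Ioi_exp_neg_sq_div_two (a : ℝ) :
    a / (a ^ 2 + 1) * exp (-a ^ 2 / 2) ≤ ∫ t in Ioi a, exp (-t ^ 2 / 2) := by
  have hw : ∀ t : ℝ, 0 ≤ 2 / (t ^ 2 + 1) ^ 2 := fun t => by positivity
  have hint : Integrable fun t : ℝ => exp (-t ^ 2 / 2) * (1 - 2 / (t ^ 2 + 1) ^ 2) := by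
    refine integrable_exp_neg_sq_div_two.mono' (by fun_prop (disch := positivity))
      (Eventually.of_forall fun t => ?_)
    have h2 : 2 / (t ^ 2 + 1) ^ 2 ≤ 2 := div_le_self zero_le_two (one_le_pow₀ (by nlinarith))
    rw [norm_mul, norm_of_nonneg (exp_pos _).le]
    refine mul_le_of_le_one_right (exp_pos _).le ?_
    rw [Real.norm_eq_abs, abs_le]
    constructor <;> linarith [hw t]
  have hlim : Tendsto (fun s => -(s / (s ^ 2 + 1)) * exp (-s ^ 2 / 2)) atTop (𝓝 0) := by
    refine squeeze_zero_norm (fun s => ?_) tendsto_exp_neg_sq_div_two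
    rw [norm_mul, norm_neg, norm_of_nonneg (exp_pos _).le, norm_div]
    refine mul_le_of_le_one_left (exp_pos _).le (div_le_one_of_le₀ ?_ (norm_nonneg _))
    rw [Real.norm_eq_abs, Real.norm_eq_abs, abs_of_pos (by positivity : (0 : ℝ) < s ^ 2 + 1)]
    cases abs_cases s <;> nlinarith
  calc a / (a ^ 2 + 1) * exp (-a ^ 2 / 2)
      = ∫ t in Ioi a, exp (-t ^ 2 / 2) * (1 - 2 / (t ^ 2 + 1) ^ 2) := by
        rw [integral_Ioi_of_hasDerivAt_of_tendsto'
          (fun t _ => hasDerivAt_neg_div_sq_add_one_mul_exp_neg_sq_div_two t)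
          hint.integrableOn hlim]
        ring
    _ ≤ ∫ t in Ioi a, exp (-t ^ 2 / 2) :=
        setIntegral_mono hint.integrableOn integrable_exp_neg_sq_div_two.integrableOn fun t =>
          mul_le_of_le_one_right (exp_pos _).le (by linarith [hw t])

lemma exp_neg_add_one_sq_div_two_le_integral {a : ℝ} (ha : 0 ≤ a) :
    exp (-(a + 1) ^ 2 / 2) ≤ ∫ t in Ioi a, exp (-t ^ 2 / 2) := by
  have hIoc : exp (-(a + 1) ^ 2 / 2) ≤ ∫ t in Ioc a (a + 1), exp (-t ^ 2 / 2) := by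
    have h := setIntegral_ge_of_const_le_real (measurableSet_Ioc (a := a) (b := a + 1)) (by simp)
      (fun t ht => exp_le_exp.2 (show -(a + 1) ^ 2 / 2 ≤ -t ^ 2 / 2 by nlinarith [ht.1, ht.2]))
      integrable_exp_neg_sq_div_two.integrableOn
    simpa using h
  exact hIoc.trans (setIntegral_mono_set integrable_exp_neg_sq_div_two.integrableOn
    (Eventually.of_forall fun t => (exp_pos _).le) Ioc_subset_Ioi_self.eventuallyLE)

lemma tendsto_integral_Ioi_exp_neg_sq_div_two_div :
    Tendsto (fun x => (∫ t in Ioi x, exp (-t ^ 2 / 2)) / (exp (-x ^ 2 / 2) / x))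
      atTop (𝓝 1) := by
  have hlow : Tendsto (fun x : ℝ => x ^ 2 / (x ^ 2 + 1)) atTop (𝓝 1) := by
    have h : Tendsto (fun x : ℝ => 1 - (x ^ 2 + 1)⁻¹) atTop (𝓝 1) := by
      simpa using (tendsto_inv_atTop_zero.comp (tendsto_atTop_add_const_right _ 1
        (tendsto_pow_atTop two_ne_zero))).const_sub (1 : ℝ)
    refine h.congr fun x => ?_
    field_simp
    ring
  refine tendsto_of_tendsto_of_tendsto_of_le_of_le' hlow tendsto_const_nhds ?_ ?_
  · filter_upwards [eventually_gt_atTop 0] with x hx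
    rw [le_div_iff₀ (by positivity)]
    calc x ^ 2 / (x ^ 2 + 1) * (exp (-x ^ 2 / 2) / x) = x / (x ^ 2 + 1) * exp (-x ^ 2 / 2) := by
          field_simp
      _ ≤ _ := le_integral_Ioi_exp_neg_sq_div_two x
  · filter_upwards [eventually_gt_atTop 0] with x hx
    exact (div_le_one (by positivity)).2 (integral_Ioi_exp_neg_sq_div_two_le hx)

end GaussianTail

section Comparison

variable {a b c : ℝ}

lemma integral_Ioi_one_add_sq_div_rpow_neg_le (hb : 1 < b) (hc : 0 < c) :
    ∫ t in Ioi c, (1 + t ^ 2 / (2 * b)) ^ (-b) ≤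
      2 * b / (c * (b - 1)) * (1 + c ^ 2 / (2 * b)) * exp (-c ^ 2 / 2 + c ^ 4 / (8 * b)) := by
  have hb0 : 0 < b := by linarith
  have hk : 0 < c / (2 * b) := by positivity
  have hx : 0 < 1 + c / (2 * b) * c := by positivity
  calc ∫ t in Ioi c, (1 + t ^ 2 / (2 * b)) ^ (-b)
      ≤ ∫ t in Ioi c, (1 + c / (2 * b) * t) ^ (-b) := by
        refine setIntegral_mono_on (integrable_one_add_sq_div_rpow_neg (by linarith)).integrableOn
          (integrableOn_Ioi_one_add_mul_rpow_neg hk hb hx) measurableSet_Ioi fun t ht => ?_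
        have hct : c * t ≤ t ^ 2 := by nlinarith [mem_Ioi.1 ht]
        refine rpow_le_rpow_of_nonpos (by nlinarith [mem_Ioi.1 ht]) ?_ (by linarith)
        rw [div_mul_eq_mul_div]
        gcongr
    _ = 2 * b / (c * (b - 1)) * (1 + c ^ 2 / (2 * b)) * (1 + c ^ 2 / (2 * b)) ^ (-b) := by
        rw [integral_Ioi_one_add_mul_rpow_neg hk hb hx, div_mul_eq_mul_div, ← sq,
          sub_eq_add_neg, rpow_add (by positivity), rpow_one]
        field_simp
    _ ≤ _ := by gcongr; exact one_add_sq_div_rpow_neg_le_exp hb0 c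

lemma integral_Ioc_one_add_sq_div_rpow_neg_le (ha : 0 ≤ a) (hb : 0 < b) :
    ∫ t in Ioc a c, (1 + t ^ 2 / (2 * b)) ^ (-b) ≤
      exp (c ^ 4 / (8 * b)) * ∫ t in Ioi a, exp (-t ^ 2 / 2) := by
  have hcont : Continuous fun t : ℝ => (1 + t ^ 2 / (2 * b)) ^ (-b) :=
    (by fun_prop : Continuous fun t : ℝ => 1 + t ^ 2 / (2 * b)).rpow_const
      fun t => Or.inl (by positivity)
  have hG := integrable_exp_neg_sq_div_two.integrableOn (s := Ioc a c)
  calc ∫ t in Ioc a c, (1 + t ^ 2 / (2 * b)) ^ (-b)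
      ≤ ∫ t in Ioc a c, exp (c ^ 4 / (8 * b)) * exp (-t ^ 2 / 2) := by
        refine setIntegral_mono_on (hcont.integrableOn_Icc.mono_set Ioc_subset_Icc_self)
          (hG.const_mul _) measurableSet_Ioc fun t ht => ?_
        have ht4 : t ^ 4 ≤ c ^ 4 := pow_le_pow_left₀ (ha.trans (le_of_lt ht.1)) ht.2 4
        calc (1 + t ^ 2 / (2 * b)) ^ (-b) ≤ exp (-t ^ 2 / 2 + t ^ 4 / (8 * b)) :=
              one_add_sq_div_rpow_neg_le_exp hb t
          _ ≤ exp (-t ^ 2 / 2 + c ^ 4 / (8 * b)) := by gcongr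
          _ = exp (c ^ 4 / (8 * b)) * exp (-t ^ 2 / 2) := by rw [← exp_add, add_comm]
    _ = exp (c ^ 4 / (8 * b)) * ∫ t in Ioc a c, exp (-t ^ 2 / 2) := integral_const_mul _ _
    _ ≤ exp (c ^ 4 / (8 * b)) * ∫ t in Ioi a, exp (-t ^ 2 / 2) :=
        mul_le_mul_of_nonneg_left (setIntegral_mono_set integrable_exp_neg_sq_div_two.integrableOn
          (Eventually.of_forall fun t => (exp_pos _).le) Ioc_subset_Ioi_self.eventuallyLE)
          (exp_pos _).le

def tailRatioBound (b c : ℝ) : ℝ :=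
  exp (c ^ 4 / (8 * b)) * (1 + 2 * b / (c * (b - 1)) * (1 + c ^ 2 / (2 * b)))

theorem integral_Ioi_one_add_sq_div_rpow_neg_le_mul (ha : 0 ≤ a) (hac : a + 1 ≤ c)
    (hb : 1 < b) :
    ∫ t in Ioi a, (1 + t ^ 2 / (2 * b)) ^ (-b) ≤
      tailRatioBound b c * ∫ t in Ioi a, exp (-t ^ 2 / 2) := by
  have hc : 0 < c := by linarith
  have hf := integrable_one_add_sq_div_rpow_neg (b := b) (by linarith)
  have hG : exp (-c ^ 2 / 2) ≤ ∫ t in Ioi a, exp (-t ^ 2 / 2) :=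
    (exp_le_exp.2 (by nlinarith)).trans (exp_neg_add_one_sq_div_two_le_integral ha)
  have htail := integral_Ioi_one_add_sq_div_rpow_neg_le hb hc
  rw [exp_add] at htail
  have hK : 0 ≤ 2 * b / (c * (b - 1)) * (1 + c ^ 2 / (2 * b)) := by
    have : 0 < b - 1 := by linarith
    positivity
  rw [← Ioc_union_Ioi_eq_Ioi (by linarith : a ≤ c),
    setIntegral_union (Ioc_disjoint_Ioi le_rfl) measurableSet_Ioi hf.integrableOn hf.integrableOn,
    Ioc_union_Ioi_eq_Ioi (by linarith : a ≤ c)]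
  calc _ ≤ exp (c ^ 4 / (8 * b)) * (∫ t in Ioi a, exp (-t ^ 2 / 2)) +
        2 * b / (c * (b - 1)) * (1 + c ^ 2 / (2 * b)) *
          ((∫ t in Ioi a, exp (-t ^ 2 / 2)) * exp (c ^ 4 / (8 * b))) := by
        refine add_le_add (integral_Ioc_one_add_sq_div_rpow_neg_le ha (by linarith))
          (htail.trans ?_)
        gcongr
    _ = _ := by rw [tailRatioBound]; ring

end Comparison

section Limits

variable {ι : Type*} {l : Filter ι} {a b c : ι → ℝ}

lemma exists_eventually_add_one_le_tendsto_pow_four_div (ha : ∀ i, 0 ≤ a i)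
    (hb : Tendsto b l atTop) (h : Tendsto (fun i => a i ^ 4 / b i) l (𝓝 0)) :
    ∃ c : ι → ℝ, (∀ᶠ i in l, a i + 1 ≤ c i) ∧ Tendsto c l atTop ∧
      Tendsto (fun i => c i ^ 4 / b i) l (𝓝 0) := by
  have hroot : Tendsto (fun i => b i ^ (8⁻¹ : ℝ)) l atTop :=
    (tendsto_rpow_atTop (by norm_num)).comp hb
  refine ⟨fun i => a i + b i ^ (8⁻¹ : ℝ), ?_,
    tendsto_atTop_add_left_of_le l 0 ha hroot, ?_⟩
  · filter_upwards [hroot.eventually_ge_atTop 1] with i hi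
    linarith
  have hsmall :
      Tendsto (fun i => 8 * (a i ^ 4 / b i) + 8 * b i ^ (-(2⁻¹ : ℝ))) l (𝓝 0) := by
    simpa using (h.const_mul 8).add (((tendsto_rpow_neg_atTop (by norm_num)).comp hb).const_mul 8)
  refine squeeze_zero' ?_ ?_ hsmall
  · filter_upwards [hb.eventually_gt_atTop 0] with i hbi
    positivity
  filter_upwards [hb.eventually_gt_atTop 0] with i hbi
  have hsum := add_pow_le (ha i) (rpow_nonneg hbi.le (8⁻¹ : ℝ)) 4
  norm_num at hsum
  have hpow : (b i ^ (8⁻¹ : ℝ)) ^ 4 = b i ^ (-(2⁻¹ : ℝ)) * b i := by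
    rw [← rpow_natCast, ← rpow_mul hbi.le, ← rpow_add_one hbi.ne']
    norm_num
  rw [div_le_iff₀ hbi]
  calc (a i + b i ^ (8⁻¹ : ℝ)) ^ 4 ≤ 8 * (a i ^ 4 + b i ^ (-(2⁻¹ : ℝ)) * b i) := by
        simpa [hpow] using hsum
    _ = (8 * (a i ^ 4 / b i) + 8 * b i ^ (-(2⁻¹ : ℝ))) * b i := by
        field_simp

lemma tendsto_tailRatioBound (hb : Tendsto b l atTop) (hc : Tendsto c l atTop)
    (hc4 : Tendsto (fun i => c i ^ 4 / b i) l (𝓝 0)) :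
    Tendsto (fun i => tailRatioBound (b i) (c i)) l (𝓝 1) := by
  have hexp : Tendsto (fun i => exp (c i ^ 4 / (8 * b i))) l (𝓝 1) := by
    have h := (continuous_exp.tendsto 0).comp (by simpa using hc4.div_const 8)
    rw [exp_zero] at h
    refine h.congr fun i => ?_
    simp only [Function.comp_apply, div_div, mul_comm]
  have hfrac : Tendsto (fun i => 2 * b i / (b i - 1)) l (𝓝 2) := by
    have hsub : Tendsto (fun i => b i - 1) l atTop := by
      simpa [sub_eq_add_neg] using tendsto_atTop_add_const_right l (-1) hb
    have h : Tendsto (fun i => 2 + 2 / (b i - 1)) l (𝓝 2) := by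
      simpa using (tendsto_const_nhds (x := (2 : ℝ))).add (tendsto_const_nhds.div_atTop hsub)
    refine h.congr' ?_
    filter_upwards [hsub.eventually_gt_atTop 0] with i hi
    field_simp
    ring
  have hsq : Tendsto (fun i => c i ^ 2 / (2 * b i)) l (𝓝 0) := by
    refine squeeze_zero' ?_ ?_ hc4
    · filter_upwards [hb.eventually_gt_atTop 0] with i hbi
      positivity
    filter_upwards [hb.eventually_gt_atTop 0, hc.eventually_ge_atTop 1] with i hbi hci
    gcongr
    · nlinarith
    · linarith
  have h := hexp.mul (((hfrac.mul hc.inv_tendsto_atTop).mul (hsq.const_add 1)).const_add 1)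
  simp only [mul_zero, add_zero, mul_one] at h
  refine h.congr fun i => ?_
  rw [tailRatioBound, Pi.inv_apply, div_mul_eq_div_div_swap (2 * b i),
    div_eq_mul_inv (2 * b i / (b i - 1))]

end Limits

/-- Lemma 2.4 (a): Gaussian-type asymptotics of the tail integral. -/
theorem tail_integral_gaussian_regime
    (a b : ℕ → ℝ) (ha : ∀ n, 0 ≤ a n) (hb : ∀ n, 1 / 2 < b n)
    (hbtop : Tendsto b atTop atTop)
    (h : Tendsto (fun n : ℕ => (a n) ^ 4 / b n) atTop (nhds 0)) :
    Tendsto (fun n : ℕ =>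
        (∫ t in Set.Ioi (a n), (1 + t ^ 2 / (2 * b n)) ^ (-(b n))) /
          ∫ t in Set.Ioi (a n), Real.exp (-t ^ 2 / 2)) atTop (nhds 1) ∧
    (Tendsto a atTop atTop →
      Tendsto (fun n : ℕ =>
          (∫ t in Set.Ioi (a n), (1 + t ^ 2 / (2 * b n)) ^ (-(b n))) /
            (Real.exp (-(a n) ^ 2 / 2) / a n)) atTop (nhds 1)) := by
  have hG : ∀ n, 0 < ∫ t in Ioi (a n), exp (-t ^ 2 / 2) := fun n =>
    (exp_pos _).trans_le (exp_neg_add_one_sq_div_two_le_integral (ha n))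
  obtain ⟨c, hac, hc, hc4⟩ := exists_eventually_add_one_le_tendsto_pow_four_div ha hbtop h
  have hratio : Tendsto (fun n => (∫ t in Ioi (a n), (1 + t ^ 2 / (2 * b n)) ^ (-(b n))) /
      ∫ t in Ioi (a n), exp (-t ^ 2 / 2)) atTop (𝓝 1) := by
    refine tendsto_of_tendsto_of_tendsto_of_le_of_le' tendsto_const_nhds
      (tendsto_tailRatioBound hbtop hc hc4) (Eventually.of_forall fun n => ?_) ?_
    · rw [one_le_div (hG n)]
      exact setIntegral_mono integrable_exp_neg_sq_div_two.integrableOn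
        (integrable_one_add_sq_div_rpow_neg (hb n)).integrableOn
        (exp_neg_sq_div_two_le_one_add_sq_div_rpow_neg (by linarith [hb n]))
    filter_upwards [hac, hbtop.eventually_gt_atTop 1] with n hacn hbn
    rw [div_le_iff₀ (hG n)]
    exact integral_Ioi_one_add_sq_div_rpow_neg_le_mul (ha n) hacn hbn
  refine ⟨hratio, fun hatop => ?_⟩
  have hprod := hratio.mul (tendsto_integral_Ioi_exp_neg_sq_div_two_div.comp hatop)
  rw [one_mul] at hprod
  exact hprod.congr fun n => div_mul_div_cancel₀ (hG n).ne'
end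
end

section
/- Let (a_n) and (b_n) be sequences of real numbers with a_n ≥ 0, b_n > 1/2 and b_n → ∞. If a_n²/b_n → ∞, then ∫_{a_n}^∞ (1 + t²/(2b_n))^{-b_n} dt ∼ (1/√(2b_n)) · (1 + a_n²/(2b_n))^{-(b_n - 1/2)} as n → ∞. -/
open MeasureTheory Filter Set
open scoped ENNReal Pointwise RealInnerProductSpace

noncomputable section

/-!
Write `u(t) = 1 + t²/(2b)`. The integrand `t u(t)^(-p)` has the explicit primitive
`-(2b/(2(p-1))) u(t)^(-(p-1))`, and `u^(-b)` is squeezed between two such integrands: from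
above by `(t/A) u^(-b)` since `t ≥ A`, from below by `(t/√(2b)) u^(-b-1/2)` since
`t² ≤ 2b u`. This pins the ratio in the theorem between `2b/(2b-1)` and
`b/(b-1) · √(1 + 2b/A²)`, and both tend to `1` when `b → ∞` and `A²/b → ∞`.
-/

section OneAddSqDiv

variable {A B p : ℝ}

lemma one_add_sq_div_pos (hB : 0 < B) (t : ℝ) : 0 < 1 + t ^ 2 / B := by positivity

lemma hasDerivAt_one_add_sq_div_rpow (hB : 0 < B) (hp : p ≠ 1) (t : ℝ) :
    HasDerivAt (fun t => -(B / (2 * (p - 1))) * (1 + t ^ 2 / B) ^ (-(p - 1)))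
      (t * (1 + t ^ 2 / B) ^ (-p)) t := by
  have hbase : HasDerivAt (fun t : ℝ => 1 + t ^ 2 / B) (2 * t / B) t := by
    simpa using ((hasDerivAt_pow 2 t).div_const B).const_add 1
  refine ((hbase.rpow_const (Or.inl (one_add_sq_div_pos hB t).ne')).const_mul
    (-(B / (2 * (p - 1))))).congr_deriv ?_
  rw [show -(p - 1) - 1 = -p by ring]
  field_simp [sub_ne_zero.2 hp]

lemma tendsto_one_add_sq_div_rpow_atTop (hB : 0 < B) (hp : 1 < p) :
    Tendsto (fun t => -(B / (2 * (p - 1))) * (1 + t ^ 2 / B) ^ (-(p - 1))) atTop (nhds 0) := by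
  have hbase : Tendsto (fun t : ℝ => 1 + t ^ 2 / B) atTop atTop :=
    tendsto_atTop_add_const_left _ _ ((tendsto_pow_atTop two_ne_zero).atTop_div_const hB)
  simpa using ((tendsto_rpow_neg_atTop (sub_pos.2 hp)).comp hbase).const_mul
    (-(B / (2 * (p - 1))))

lemma mul_one_add_sq_div_rpow_nonneg (hA : 0 ≤ A) (hB : 0 < B) :
    ∀ t ∈ Ioi A, 0 ≤ t * (1 + t ^ 2 / B) ^ (-p) := fun t ht =>
  mul_nonneg (hA.trans ht.le) (Real.rpow_nonneg (one_add_sq_div_pos hB t).le _)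

lemma integrableOn_Ioi_mul_one_add_sq_div_rpow (hA : 0 ≤ A) (hB : 0 < B) (hp : 1 < p) :
    IntegrableOn (fun t => t * (1 + t ^ 2 / B) ^ (-p)) (Ioi A) :=
  integrableOn_Ioi_deriv_of_nonneg' (fun t _ => hasDerivAt_one_add_sq_div_rpow hB hp.ne' t)
    (mul_one_add_sq_div_rpow_nonneg hA hB) (tendsto_one_add_sq_div_rpow_atTop hB hp)

lemma integral_Ioi_mul_one_add_sq_div_rpow (hA : 0 ≤ A) (hB : 0 < B) (hp : 1 < p) :
    ∫ t in Ioi A, t * (1 + t ^ 2 / B) ^ (-p)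
      = B / (2 * (p - 1)) * (1 + A ^ 2 / B) ^ (-(p - 1)) := by
  rw [integral_Ioi_of_hasDerivAt_of_nonneg' (fun t _ => hasDerivAt_one_add_sq_div_rpow hB hp.ne' t)
    (mul_one_add_sq_div_rpow_nonneg hA hB) (tendsto_one_add_sq_div_rpow_atTop hB hp)]
  ring

lemma one_add_sq_div_rpow_le_inv_mul (hA : 0 < A) (hB : 0 < B) :
    ∀ t ∈ Ioi A, (1 + t ^ 2 / B) ^ (-p) ≤ A⁻¹ * (t * (1 + t ^ 2 / B) ^ (-p)) := fun t ht => by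
  rw [← mul_assoc]
  exact le_mul_of_one_le_left (Real.rpow_nonneg (one_add_sq_div_pos hB t).le _)
    ((one_le_inv_mul₀ hA).2 ht.le)

lemma mul_one_add_sq_div_rpow_le_sqrt_mul (hB : 0 < B) (t : ℝ) :
    t * (1 + t ^ 2 / B) ^ (-(p + 1 / 2)) ≤ √B * (1 + t ^ 2 / B) ^ (-p) := by
  set u := 1 + t ^ 2 / B
  have hu : 0 < u := one_add_sq_div_pos hB t
  have ht : t ≤ √B * √u := by
    rw [← Real.sqrt_mul hB.le]
    refine (le_abs_self t).trans (Real.abs_le_sqrt ?_)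
    simp only [u]
    field_simp
    linarith
  rw [show -(p + 1 / 2) = -p - 1 / 2 by ring, Real.rpow_sub hu, ← Real.sqrt_eq_rpow,
    mul_div_left_comm, mul_comm √B]
  exact mul_le_mul_of_nonneg_left ((div_le_iff₀ (Real.sqrt_pos.2 hu)).2 ht)
    (Real.rpow_nonneg hu.le _)

lemma integrableOn_Ioi_one_add_sq_div_rpow (hA : 0 < A) (hB : 0 < B) (hp : 1 < p) :
    IntegrableOn (fun t => (1 + t ^ 2 / B) ^ (-p)) (Ioi A) := by
  refine ((integrableOn_Ioi_mul_one_add_sq_div_rpow hA.le hB hp).const_mul A⁻¹).mono'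
    ?_ ?_
  · exact (Continuous.rpow_const (by fun_prop)
      fun t => Or.inl (one_add_sq_div_pos hB t).ne').aestronglyMeasurable
  · refine (ae_restrict_iff' measurableSet_Ioi).2 (ae_of_all _ fun t ht => ?_)
    rw [Real.norm_of_nonneg (Real.rpow_nonneg (one_add_sq_div_pos hB t).le _)]
    exact one_add_sq_div_rpow_le_inv_mul hA hB t ht

lemma div_mul_rpow_le_sqrt_mul_integral (hA : 0 < A) (hB : 0 < B) (hp : 1 < p) :
    B / (2 * p - 1) * (1 + A ^ 2 / B) ^ (-(p - 1 / 2))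
      ≤ √B * ∫ t in Ioi A, (1 + t ^ 2 / B) ^ (-p) := by
  have hp' : 1 < p + 1 / 2 := by linarith
  calc B / (2 * p - 1) * (1 + A ^ 2 / B) ^ (-(p - 1 / 2))
      = ∫ t in Ioi A, t * (1 + t ^ 2 / B) ^ (-(p + 1 / 2)) := by
        rw [integral_Ioi_mul_one_add_sq_div_rpow hA.le hB hp']
        ring_nf
    _ ≤ ∫ t in Ioi A, √B * (1 + t ^ 2 / B) ^ (-p) :=
        setIntegral_mono_on (integrableOn_Ioi_mul_one_add_sq_div_rpow hA.le hB hp')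
          ((integrableOn_Ioi_one_add_sq_div_rpow hA hB hp).const_mul _) measurableSet_Ioi
          fun t _ => mul_one_add_sq_div_rpow_le_sqrt_mul hB t
    _ = √B * ∫ t in Ioi A, (1 + t ^ 2 / B) ^ (-p) := integral_const_mul _ _

lemma integral_le_inv_mul_div_mul_rpow (hA : 0 < A) (hB : 0 < B) (hp : 1 < p) :
    ∫ t in Ioi A, (1 + t ^ 2 / B) ^ (-p)
      ≤ A⁻¹ * (B / (2 * (p - 1)) * (1 + A ^ 2 / B) ^ (-(p - 1))) := by
  calc ∫ t in Ioi A, (1 + t ^ 2 / B) ^ (-p)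
      ≤ ∫ t in Ioi A, A⁻¹ * (t * (1 + t ^ 2 / B) ^ (-p)) :=
        setIntegral_mono_on (integrableOn_Ioi_one_add_sq_div_rpow hA hB hp)
          ((integrableOn_Ioi_mul_one_add_sq_div_rpow hA.le hB hp).const_mul _) measurableSet_Ioi
          (one_add_sq_div_rpow_le_inv_mul hA hB)
    _ = A⁻¹ * (B / (2 * (p - 1)) * (1 + A ^ 2 / B) ^ (-(p - 1))) := by
        rw [integral_const_mul, integral_Ioi_mul_one_add_sq_div_rpow hA.le hB hp]

lemma sqrt_mul_sqrt_one_add_sq_div (hA : 0 < A) (hB : 0 < B) :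
    √B * √(1 + A ^ 2 / B) = A * √(1 + B / A ^ 2) := by
  have hA' : A * √(1 + B / A ^ 2) = √(A ^ 2 * (1 + B / A ^ 2)) := by
    rw [Real.sqrt_mul (sq_nonneg A), Real.sqrt_sq hA.le]
  rw [hA', ← Real.sqrt_mul hB.le]
  congr 1
  field_simp
  ring

end OneAddSqDiv

section HeavyTail

variable {A b : ℝ}

def heavyTailApprox (b A : ℝ) : ℝ :=
  1 / √(2 * b) * (1 + A ^ 2 / (2 * b)) ^ (-(b - 1 / 2))

lemma heavyTailApprox_pos (hb : 0 < b) : 0 < heavyTailApprox b A := by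
  have := one_add_sq_div_pos (by positivity : (0 : ℝ) < 2 * b) A
  unfold heavyTailApprox
  positivity

lemma le_integral_div_heavyTailApprox (hA : 0 < A) (hb : 1 < b) :
    2 * b / (2 * b - 1)
      ≤ (∫ t in Ioi A, (1 + t ^ 2 / (2 * b)) ^ (-b)) / heavyTailApprox b A := by
  have hB : 0 < 2 * b := by linarith
  have key := div_mul_rpow_le_sqrt_mul_integral hA hB hb
  rw [le_div_iff₀ (heavyTailApprox_pos (by linarith)), heavyTailApprox]
  calc 2 * b / (2 * b - 1) * (1 / √(2 * b) * (1 + A ^ 2 / (2 * b)) ^ (-(b - 1 / 2)))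
      = 2 * b / (2 * b - 1) * (1 + A ^ 2 / (2 * b)) ^ (-(b - 1 / 2)) / √(2 * b) := by ring
    _ ≤ _ := (div_le_iff₀' (Real.sqrt_pos.2 hB)).2 key

lemma integral_div_heavyTailApprox_le (hA : 0 < A) (hb : 1 < b) :
    (∫ t in Ioi A, (1 + t ^ 2 / (2 * b)) ^ (-b)) / heavyTailApprox b A
      ≤ b / (b - 1) * √(1 + 2 * b / A ^ 2) := by
  have hB : 0 < 2 * b := by linarith
  rw [div_le_iff₀ (heavyTailApprox_pos (by linarith))]
  refine (integral_le_inv_mul_div_mul_rpow hA hB hb).trans_eq ?_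
  have hs : 0 < √(2 * b) := Real.sqrt_pos.2 hB
  have hsqrt : √(1 + A ^ 2 / (2 * b)) = A * √(1 + 2 * b / A ^ 2) / √(2 * b) := by
    rw [eq_div_iff hs.ne', mul_comm, sqrt_mul_sqrt_one_add_sq_div hA hB]
  rw [heavyTailApprox, show -(b - 1) = -(b - 1 / 2) + 1 / 2 by ring,
    Real.rpow_add (one_add_sq_div_pos hB A), ← Real.sqrt_eq_rpow, hsqrt]
  field_simp

end HeavyTail

lemma tendsto_div_sub_const_atTop (c : ℝ) :
    Tendsto (fun x : ℝ => x / (x - c)) atTop (nhds 1) := by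
  have h : Tendsto (fun x : ℝ => 1 / (1 - c * x⁻¹)) atTop (nhds (1 / (1 - c * 0))) :=
    tendsto_const_nhds.div (tendsto_const_nhds.sub (tendsto_inv_atTop_zero.const_mul c))
      (by simp)
  rw [mul_zero, sub_zero, div_one] at h
  refine h.congr' ?_
  filter_upwards [eventually_gt_atTop 0] with x hx
  field_simp

theorem tail_integral_heavy_regime_general
    (a b : ℕ → ℝ) (ha : ∀ n, 0 ≤ a n)
    (hbtop : Tendsto b atTop atTop)
    (h : Tendsto (fun n : ℕ => (a n) ^ 2 / b n) atTop atTop) :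
    Tendsto (fun n : ℕ =>
        (∫ t in Set.Ioi (a n), (1 + t ^ 2 / (2 * b n)) ^ (-(b n))) /
          (1 / Real.sqrt (2 * b n) *
            (1 + (a n) ^ 2 / (2 * b n)) ^ (-(b n - 1 / 2)))) atTop (nhds 1) := by
  have hb_gt : ∀ᶠ n in atTop, 1 < b n := hbtop.eventually_gt_atTop 1
  have ha_pos : ∀ᶠ n in atTop, 0 < a n := by
    filter_upwards [h.eventually_gt_atTop 0] with n hn
    refine (ha n).lt_of_ne fun h0 => ?_
    simp [← h0] at hn
  have hlower : Tendsto (fun n => 2 * b n / (2 * b n - 1)) atTop (nhds 1) :=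
    (tendsto_div_sub_const_atTop 1).comp (hbtop.const_mul_atTop two_pos)
  have hupper : Tendsto (fun n => b n / (b n - 1) * √(1 + 2 * b n / a n ^ 2)) atTop (nhds 1) := by
    have hratio : Tendsto (fun n => 2 * b n / a n ^ 2) atTop (nhds 0) := by
      simpa [mul_div_assoc] using (tendsto_inv_atTop_zero.comp h).const_mul 2
    have hsqrt := (Real.continuous_sqrt.tendsto 1).comp (by simpa using hratio.const_add 1)
    simpa using ((tendsto_div_sub_const_atTop 1).comp hbtop).mul hsqrt
  refine tendsto_of_tendsto_of_tendsto_of_le_of_le' hlower hupper ?_ ?_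
  · filter_upwards [hb_gt, ha_pos] with n hbn han using le_integral_div_heavyTailApprox han hbn
  · filter_upwards [hb_gt, ha_pos] with n hbn han using integral_div_heavyTailApprox_le han hbn

/-- Lemma 2.4 (b): asymptotics of the tail integral in the heavy-tail regime. -/
theorem tail_integral_heavy_regime
    (a b : ℕ → ℝ) (ha : ∀ n, 0 ≤ a n) (hb : ∀ n, 1 / 2 < b n)
    (hbtop : Tendsto b atTop atTop)
    (h : Tendsto (fun n : ℕ => (a n) ^ 2 / b n) atTop atTop) :
    Tendsto (fun n : ℕ =>
        (∫ t in Set.Ioi (a n), (1 + t ^ 2 / (2 * b n)) ^ (-(b n))) /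
          (1 / Real.sqrt (2 * b n) *
            (1 + (a n) ^ 2 / (2 * b n)) ^ (-(b n - 1 / 2)))) atTop (nhds 1) :=
  tail_integral_heavy_regime_general a b ha hbtop h

end
end
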